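/- Let V be a commutative unital ring, 𝔪 an idempotent ideal, and 𝔪̃ = 𝔪 ⊗_V 𝔪. For any V-module M, the module Hom_V(𝔪̃, M) is closed, i.e. the canonical map Hom_V(𝔪̃, M) → Hom_V(𝔪, Hom_V(𝔪̃, M)), f ↦ (a ↦ a·f), is an isomorphism. -/
import Mathlib

open TensorProduct

variable {V : Type*} [CommRing V]

/-- The canonical multiplication map `μ : 𝔪 ⊗[V] M → M`, `a ⊗ x ↦ a • x`. -/
noncomputable def smulMap (𝔪 : Ideal V) (M : Type*) [AddCommGroup M] [Module V M] :
    ↥𝔪 ⊗[V] M →ₗ[V] M :=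
  TensorProduct.lift ((LinearMap.lsmul V M).comp 𝔪.subtype)

/-- The canonical map `μ' : M → Hom_V(𝔪, M)`, `x ↦ (a ↦ a • x)`. -/
noncomputable def closedMap (𝔪 : Ideal V) (M : Type*) [AddCommGroup M] [Module V M] :
    M →ₗ[V] (↥𝔪 →ₗ[V] M) :=
  ((LinearMap.lsmul V M).comp 𝔪.subtype).flip

lemma smulMap_tmul' (𝔪 : Ideal V) (M : Type*) [AddCommGroup M] [Module V M]
    (a : ↥𝔪) (x : M) : smulMap 𝔪 M (a ⊗ₜ x) = (a : V) • x := rfl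

/-- Key identity: for `v ∈ 𝔪` and `k ∈ 𝔪 ⊗ 𝔪`, `v • k = v ⊗ μ(k)`. -/
lemma smul_eq_tmul_smulMap (𝔪 : Ideal V) (v : ↥𝔪) (k : ↥𝔪 ⊗[V] ↥𝔪) :
    (v : V) • k = v ⊗ₜ[V] (smulMap 𝔪 ↥𝔪 k) := by
  induction k with
  | zero => simp
  | tmul b c =>
      have hvb : (v : V) • b = (b : V) • v := Subtype.ext (mul_comm _ _)
      rw [smulMap_tmul', smul_tmul', hvb, smul_tmul]
  | add x y hx hy => rw [smul_add, hx, hy, map_add, tmul_add]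

lemma smulMap_eq_lTensor (𝔪 : Ideal V) :
    smulMap 𝔪 (↥𝔪 ⊗[V] ↥𝔪) = LinearMap.lTensor ↥𝔪 (smulMap 𝔪 ↥𝔪) := by
  apply TensorProduct.ext'
  intro a t
  rw [smulMap_tmul', LinearMap.lTensor_tmul, smul_eq_tmul_smulMap]

lemma smulMap_surjective (𝔪 : Ideal V) (hm : 𝔪 * 𝔪 = 𝔪) :
    Function.Surjective (smulMap 𝔪 ↥𝔪) := by
  intro b
  have key : ∀ x ∈ 𝔪 * 𝔪, ∃ t, ((smulMap 𝔪 ↥𝔪 t : ↥𝔪) : V) = x := by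
    intro x hx
    refine Submodule.mul_induction_on hx ?_ ?_
    · intro u hu v hv
      exact ⟨(⟨u, hu⟩ : ↥𝔪) ⊗ₜ (⟨v, hv⟩ : ↥𝔪), rfl⟩
    · rintro x y ⟨t, ht⟩ ⟨s, hs⟩
      exact ⟨t + s, by rw [map_add]; exact congrArg₂ (· + ·) ht hs⟩
  obtain ⟨t, ht⟩ := key (b : V) (by rw [hm]; exact b.2)
  exact ⟨t, Subtype.ext ht⟩


lemma ker_lTensor_le {R Q A B M : Type*} [CommRing R] [AddCommGroup Q]
    [AddCommGroup A] [AddCommGroup B] [AddCommGroup M]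
    [Module R Q] [Module R A] [Module R B] [Module R M]
    (m : A →ₗ[R] B) (hs : Function.Surjective m) (F : Q ⊗[R] A →ₗ[R] M)
    (h0 : F.comp (LinearMap.lTensor Q (LinearMap.ker m).subtype) = 0) :
    LinearMap.ker (LinearMap.lTensor Q m) ≤ LinearMap.ker F := by
  intro x hx
  rw [LinearMap.mem_ker] at hx
  obtain ⟨y, hy⟩ :=
    ((lTensor_exact Q (LinearMap.exact_subtype_ker_map m) hs) x).mp hx
  rw [LinearMap.mem_ker, ← hy]
  exact LinearMap.congr_fun h0 y

lemma factor_of_surjective {R A B M : Type*} [CommRing R]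
    [AddCommGroup A] [AddCommGroup B] [AddCommGroup M]
    [Module R A] [Module R B] [Module R M]
    (g : A →ₗ[R] B) (hg : Function.Surjective g) (F : A →ₗ[R] M)
    (h : LinearMap.ker g ≤ LinearMap.ker F) :
    ∃ f : B →ₗ[R] M, ∀ x, f (g x) = F x := by
  let e := g.quotKerEquivOfSurjective hg
  refine ⟨(Submodule.liftQ (LinearMap.ker g) F h).comp (e.symm : B →ₗ[R] A ⧸ LinearMap.ker g),
    fun x => ?_⟩
  have hmk : e (Submodule.Quotient.mk x) = g x := rfl
  have hsymm : e.symm (g x) = Submodule.Quotient.mk x := by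
    rw [← hmk]; exact e.symm_apply_apply _
  simp only [LinearMap.comp_apply, LinearEquiv.coe_coe, hsymm, Submodule.liftQ_apply]

/-- For 𝔪 idempotent and 𝔪̃ = 𝔪 ⊗ 𝔪, the module Hom_V(𝔪̃, M) is closed:
the canonical map Hom_V(𝔪̃, M) → Hom_V(𝔪, Hom_V(𝔪̃, M)) is an isomorphism. -/
theorem stmt5 {V : Type*} [CommRing V] (𝔪 : Ideal V) (hm : 𝔪 * 𝔪 = 𝔪)
    (M : Type*) [AddCommGroup M] [Module V M] :
    Function.Bijective (closedMap 𝔪 ((↥𝔪 ⊗[V] ↥𝔪) →ₗ[V] M)) := by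
  obtain ⟨m, hmdef⟩ : ∃ m : ↥𝔪 ⊗[V] ↥𝔪 →ₗ[V] ↥𝔪, m = smulMap 𝔪 ↥𝔪 := ⟨_, rfl⟩
  obtain ⟨μ, hμdef⟩ : ∃ μ : ↥𝔪 ⊗[V] (↥𝔪 ⊗[V] ↥𝔪) →ₗ[V] ↥𝔪 ⊗[V] ↥𝔪,
      μ = smulMap 𝔪 (↥𝔪 ⊗[V] ↥𝔪) := ⟨_, rfl⟩
  have hB : μ = LinearMap.lTensor ↥𝔪 m := by
    rw [hμdef, hmdef]; exact smulMap_eq_lTensor 𝔪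
  have hmsurj : Function.Surjective m := by
    rw [hmdef]; exact smulMap_surjective 𝔪 hm
  have hμsurj : Function.Surjective μ := by
    rw [hB]; exact LinearMap.lTensor_surjective _ hmsurj
  have hμtmul : ∀ (a : ↥𝔪) (t : ↥𝔪 ⊗[V] ↥𝔪), μ (a ⊗ₜ t) = (a : V) • t := by
    intro a t; rw [hμdef]; rfl
  have hclosed : ∀ (f : (↥𝔪 ⊗[V] ↥𝔪) →ₗ[V] M) (a : ↥𝔪) (t : ↥𝔪 ⊗[V] ↥𝔪),
      closedMap 𝔪 ((↥𝔪 ⊗[V] ↥𝔪) →ₗ[V] M) f a t = f (μ (a ⊗ₜ t)) := by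
    intro f a t
    simp only [closedMap, LinearMap.flip_apply, LinearMap.comp_apply,
      Submodule.coe_subtype, LinearMap.lsmul_apply, LinearMap.smul_apply,
      hμtmul, map_smul]
  constructor
  · -- injectivity
    intro f g hfg
    have hcomp : f.comp μ = g.comp μ := by
      apply TensorProduct.ext'
      intro a t
      have h1 := LinearMap.congr_fun (LinearMap.congr_fun hfg a) t
      rw [hclosed, hclosed] at h1
      exact h1
    apply LinearMap.ext
    intro x
    obtain ⟨y, rfl⟩ := hμsurj x
    exact LinearMap.congr_fun hcomp y
  · -- surjectivity
    intro ψ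
    obtain ⟨F, hF⟩ : ∃ F : ↥𝔪 ⊗[V] (↥𝔪 ⊗[V] ↥𝔪) →ₗ[V] M,
        F = TensorProduct.lift ψ := ⟨_, rfl⟩
    have hFtmul : ∀ (a : ↥𝔪) (t : ↥𝔪 ⊗[V] ↥𝔪), F (a ⊗ₜ t) = ψ a t := by
      intro a t; rw [hF]; exact TensorProduct.lift.tmul a t
    have hzero : F.comp (LinearMap.lTensor ↥𝔪 (LinearMap.ker m).subtype) = 0 := by
      apply TensorProduct.ext'
      intro a k
      rw [LinearMap.comp_apply, LinearMap.lTensor_tmul, LinearMap.zero_apply,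
        Submodule.coe_subtype, hFtmul]
      have hk : m (k : ↥𝔪 ⊗[V] ↥𝔪) = 0 := k.2
      have key : ∀ x ∈ 𝔪 * 𝔪, ∃ hx : x ∈ 𝔪,
          ψ ⟨x, hx⟩ (k : ↥𝔪 ⊗[V] ↥𝔪) = 0 := by
        intro x hx
        refine Submodule.mul_induction_on hx ?_ ?_
        · intro u hu v hv
          refine ⟨Ideal.mul_mem_right v 𝔪 hu, ?_⟩
          have huv : (⟨u * v, Ideal.mul_mem_right v 𝔪 hu⟩ : ↥𝔪)
              = v • (⟨u, hu⟩ : ↥𝔪) := Subtype.ext (mul_comm u v)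
          rw [huv, map_smul, LinearMap.smul_apply, ← map_smul]
          have hv0 : v • (k : ↥𝔪 ⊗[V] ↥𝔪) = 0 := by
            have h1 := smul_eq_tmul_smulMap 𝔪 ⟨v, hv⟩ (k : ↥𝔪 ⊗[V] ↥𝔪)
            rw [← hmdef, hk, tmul_zero] at h1
            exact h1
          rw [hv0, map_zero]
        · rintro x y ⟨hx, px⟩ ⟨hy, py⟩
          refine ⟨add_mem hx hy, ?_⟩
          have hxy : (⟨x + y, add_mem hx hy⟩ : ↥𝔪) = ⟨x, hx⟩ + ⟨y, hy⟩ := rfl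
          rw [hxy, map_add, LinearMap.add_apply, px, py, add_zero]
      obtain ⟨ha, h0⟩ := key (a : V) (by rw [hm]; exact a.2)
      have haa : (⟨(a : V), ha⟩ : ↥𝔪) = a := Subtype.ext rfl
      rw [haa] at h0
      exact h0
    have hker : LinearMap.ker μ ≤ LinearMap.ker F := by
      rw [hB]
      exact ker_lTensor_le m hmsurj F hzero
    obtain ⟨f, hfμ⟩ := factor_of_surjective μ hμsurj F hker
    refine ⟨f, ?_⟩
    apply LinearMap.ext
    intro a
    apply TensorProduct.ext'
    intro b c
    rw [hclosed, hfμ, hFtmul]
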